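/- arXiv:2504.05710 — 3 statements merged into one kernel-verified Lean document; each statement's English description precedes it below -/
import Mathlib

section
/- Let f : {-1,1}^N → ℝ be nonzero of degree d and let 𝒮 be a maximal collection of pairwise disjoint maximum monomials of f. If η is any partial assignment whose support contains all variables appearing in monomials of 𝒮 and such that x ↦ f(x^η) is not identically zero, then the function x ↦ f(x^η) has degree at most d − 1. -/
open Finset

/-- The real value of a bit of the hypercube `{-1,1}^N`, encoded by a `Bool`. -/
def chi (b : Bool) : ℝ := if b then 1 else -1

/-- The character `x ↦ ∏_{i ∈ S} x_i` on the hypercube. -/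
def charS {N : ℕ} (S : Finset (Fin N)) (x : Fin N → Bool) : ℝ := ∏ i ∈ S, chi (x i)

/-- The Fourier coefficient `a_S = 2^{-N} ∑_x f(x) · x_S` of `f : {-1,1}^N → ℝ`. -/
noncomputable def coeff {N : ℕ} (f : (Fin N → Bool) → ℝ) (S : Finset (Fin N)) : ℝ :=
  ((2 : ℝ) ^ N)⁻¹ * ∑ x : Fin N → Bool, f x * charS S x

/-- A partial assignment `μ : [N] → {-1,1,⋆}`, with `⋆` encoded by `none`. -/
abbrev PartialAssignment (N : ℕ) := Fin N → Option Bool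

/-- The support of a partial assignment, as a finset. -/
def suppPA {N : ℕ} (μ : PartialAssignment N) : Finset (Fin N) :=
  Finset.univ.filter fun i => (μ i).isSome

/-- The modification `x^μ` of `x` by the partial assignment `μ`. -/
def patch {N : ℕ} (x : Fin N → Bool) (μ : PartialAssignment N) : Fin N → Bool :=
  fun i => (μ i).getD (x i)

open scoped symmDiff

lemma chi_sq (b : Bool) : chi b * chi b = 1 := by cases b <;> simp [chi]

lemma chi_not (b : Bool) : chi (!b) = - chi b := by cases b <;> simp [chi]

lemma sum_charS_eq_zero {N : ℕ} {V : Finset (Fin N)} (hV : V ≠ ∅) :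
    ∑ x : Fin N → Bool, charS V x = 0 := by
  obtain ⟨i, hi⟩ := Finset.nonempty_iff_ne_empty.mpr hV
  apply Finset.sum_ninvolution (fun x => Function.update x i (!x i))
  · intro x
    have h1 : charS V (Function.update x i (!x i)) = - charS V x := by
      unfold charS
      rw [← Finset.mul_prod_erase V _ hi, ← Finset.mul_prod_erase V _ hi]
      have h : ∏ j ∈ V.erase i, chi (Function.update x i (!x i) j)
          = ∏ j ∈ V.erase i, chi (x j) :=
        Finset.prod_congr rfl fun j hj => by
          rw [Function.update_of_ne (Finset.ne_of_mem_erase hj)]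
      rw [h, Function.update_self, chi_not]; ring
    rw [h1]; ring
  · intro x _
    intro h
    have := congrFun h i
    simp at this
  · intro x; exact Finset.mem_univ _
  · intro x
    funext j
    by_cases hj : j = i
    · subst hj; simp
    · simp [Function.update_of_ne hj]

lemma charS_mul {N : ℕ} (A B : Finset (Fin N)) (x : Fin N → Bool) :
    charS A x * charS B x = charS (A ∆ B) x := by
  have hsymm : A ∆ B = A \ B ∪ B \ A := by rw [symmDiff_def, Finset.sup_eq_union]
  have hsq : (∏ i ∈ A ∩ B, chi (x i)) * ∏ i ∈ A ∩ B, chi (x i) = 1 := by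
    rw [← Finset.prod_mul_distrib]
    exact Finset.prod_eq_one fun i _ => chi_sq _
  unfold charS
  rw [← Finset.prod_inter_mul_prod_diff A B (fun i => chi (x i)),
      ← Finset.prod_inter_mul_prod_diff B A (fun i => chi (x i)), Finset.inter_comm B A,
      hsymm, Finset.prod_union disjoint_sdiff_sdiff, mul_mul_mul_comm, hsq, one_mul]

lemma sum_charS_mul {N : ℕ} (A B : Finset (Fin N)) :
    ∑ x : Fin N → Bool, charS A x * charS B x = if A = B then (2:ℝ)^N else 0 := by
  simp_rw [charS_mul]
  by_cases h : A = B
  · subst h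
    simp only [if_pos rfl, symmDiff_self]
    have : (⊥ : Finset (Fin N)) = (∅ : Finset (Fin N)) := rfl
    simp [charS, this, Finset.card_univ]
  · rw [if_neg h]
    apply sum_charS_eq_zero
    intro hc
    exact h (symmDiff_eq_bot.mp hc)

lemma sum_charS_sq {N : ℕ} (x y : Fin N → Bool) :
    ∑ S : Finset (Fin N), charS S x * charS S y = if x = y then (2:ℝ)^N else 0 := by
  have key : ∀ S : Finset (Fin N), charS S x * charS S y
      = ∏ i ∈ S, (chi (x i) * chi (y i)) := fun S => (Finset.prod_mul_distrib).symm
  simp_rw [key]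
  have := Finset.prod_add (fun i => chi (x i) * chi (y i)) (fun _ => (1:ℝ)) Finset.univ
  simp only [Finset.prod_const_one, mul_one] at this
  rw [← Finset.powerset_univ, ← this]
  by_cases h : x = y
  · subst h
    rw [if_pos rfl]
    have : ∀ i : Fin N, chi (x i) * chi (x i) + 1 = 2 := fun i => by rw [chi_sq]; norm_num
    simp_rw [this]
    simp [Finset.prod_const, Finset.card_univ]
  · rw [if_neg h]
    obtain ⟨i, hi⟩ : ∃ i, x i ≠ y i := by
      by_contra hc; push_neg at hc; exact h (funext hc)
    apply Finset.prod_eq_zero (Finset.mem_univ i)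
    have : chi (x i) * chi (y i) = -1 := by
      cases hx : x i <;> cases hy : y i <;> simp_all [chi]
    rw [this]; ring

lemma two_pow_ne {N : ℕ} : ((2:ℝ)^N) ≠ 0 := by positivity

lemma inversion {N : ℕ} (f : (Fin N → Bool) → ℝ) (y : Fin N → Bool) :
    ∑ S : Finset (Fin N), coeff f S * charS S y = f y := by
  unfold coeff
  simp_rw [mul_assoc, ← Finset.mul_sum]
  simp_rw [Finset.sum_mul]
  rw [Finset.sum_comm]
  simp_rw [mul_assoc, ← Finset.mul_sum]
  have : ∀ x : Fin N → Bool, ∑ S : Finset (Fin N), charS S x * charS S y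
      = if x = y then (2:ℝ)^N else 0 := fun x => sum_charS_sq x y
  simp_rw [this]
  simp only [mul_ite, mul_zero]
  rw [Finset.sum_ite_eq' Finset.univ y (fun x => f x * (2:ℝ)^N)]
  simp only [Finset.mem_univ, if_pos]
  field_simp

lemma charS_patch {N : ℕ} (S : Finset (Fin N)) (η : PartialAssignment N) (x : Fin N → Bool) :
    charS S (patch x η)
      = (∏ i ∈ S ∩ suppPA η, chi ((η i).getD false)) * charS (S \ suppPA η) x := by
  unfold charS patch
  rw [← Finset.prod_inter_mul_prod_diff S (suppPA η)]
  congr 1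
  · apply Finset.prod_congr rfl
    intro i hi
    have : (η i).isSome := by
      have := Finset.mem_inter.mp hi |>.2
      simpa [suppPA] using this
    obtain ⟨b, hb⟩ := Option.isSome_iff_exists.mp this
    rw [hb]; rfl
  · apply Finset.prod_congr rfl
    intro i hi
    have : η i = none := by
      have := Finset.mem_sdiff.mp hi |>.2
      simp [suppPA] at this
      exact Option.not_isSome_iff_eq_none.mp (by simpa using this)
    rw [this]; rfl


/-- Let `f` be nonzero of degree `d` and `𝒮` a maximal collection of pairwise
disjoint maximum monomials of `f`. If `η` is a partial assignment whose support contains all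
variables of monomials in `𝒮` and the restricted function `x ↦ f(x^η)` is not identically
zero, then this restricted function has degree at most `d - 1`. -/
theorem stmt3 {N : ℕ} (f : (Fin N → Bool) → ℝ) (d : ℕ) (𝒮 : Finset (Finset (Fin N)))
    (η : PartialAssignment N)
    (hf : ∃ x, f x ≠ 0)
    (hdeg_le : ∀ T, coeff f T ≠ 0 → T.card ≤ d)
    (hdeg_eq : ∃ T, coeff f T ≠ 0 ∧ T.card = d)
    (h𝒮max : ∀ S ∈ 𝒮, coeff f S ≠ 0 ∧ S.card = d)
    (h𝒮disj : ∀ S₁ ∈ 𝒮, ∀ S₂ ∈ 𝒮, S₁ ≠ S₂ → Disjoint S₁ S₂)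
    (h𝒮maximal : ∀ T, coeff f T ≠ 0 → T.card = d → ∃ S ∈ 𝒮, ¬ Disjoint T S)
    (hη : ∀ S ∈ 𝒮, ∀ i ∈ S, (η i).isSome)
    (hg : ∃ x, f (patch x η) ≠ 0) :
    ∀ T, coeff (fun x => f (patch x η)) T ≠ 0 → T.card ≤ d - 1 := by
  intro T hT
  by_contra hTd
  push_neg at hTd
  -- expand coeff g T
  have hexp : coeff (fun x => f (patch x η)) T
      = ∑ S : Finset (Fin N), coeff f S * (∏ i ∈ S ∩ suppPA η, chi ((η i).getD false))
          * (if S \ suppPA η = T then 1 else 0) := by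
    unfold coeff
    have h1 : ∀ x, f (patch x η) = ∑ S : Finset (Fin N), coeff f S * charS S (patch x η) :=
      fun x => (inversion f (patch x η)).symm
    simp_rw [h1, Finset.sum_mul]
    rw [Finset.sum_comm]
    rw [Finset.mul_sum]
    apply Finset.sum_congr rfl
    intro S _
    simp_rw [charS_patch, mul_assoc, ← Finset.mul_sum]
    rw [sum_charS_mul]
    by_cases h : S \ suppPA η = T
    · rw [if_pos h, if_pos h]
      simp only [coeff]
      field_simp
    · rw [if_neg h, if_neg h]
      ring
  rw [hexp] at hT
  obtain ⟨S, _, hS⟩ := Finset.exists_ne_zero_of_sum_ne_zero hT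
  have hST : S \ suppPA η = T := by
    by_contra h
    rw [if_neg h, mul_zero] at hS
    exact hS rfl
  rw [if_pos hST, mul_one] at hS
  have haS : coeff f S ≠ 0 := fun h => hS (by rw [h, zero_mul])
  have hSd : S.card ≤ d := hdeg_le S haS
  have hTcard : T.card ≤ S.card := hST ▸ Finset.card_le_card (Finset.sdiff_subset)
  have hTd' : T.card = d := by omega
  have hScard : S.card = d := by omega
  have hSsub : S \ suppPA η = S := by
    apply Finset.eq_of_subset_of_card_le Finset.sdiff_subset
    rw [hST, hTd', hScard]
  have hSeqT : S = T := by rw [← hSsub, hST]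
  obtain ⟨S', hS'mem, hS'⟩ := h𝒮maximal T (hSeqT ▸ haS) hTd'
  obtain ⟨i, hiT, hiS'⟩ := Finset.not_disjoint_iff.mp hS'
  have hsome := hη S' hS'mem i hiS'
  have hin : i ∈ suppPA η := by simp [suppPA, hsome]
  have hout : i ∈ S \ suppPA η := by rw [hST]; exact hiT
  exact (Finset.mem_sdiff.mp hout).2 hin
end

section
/- Let f : {-1,1}^N → ℝ be nonzero of degree d, and let m > 0 be an integer. Then there exists a partial assignment μ with |μ| ≤ m·d² such that one of the following holds: (a) f(x^μ) ≠ 0 for all x ∈ {-1,1}^N; or (b) for every x ∈ {-1,1}^N there exist m pairwise disjoint partial assignments μ_1,…,μ_m, each of size at most d, with f(x^{μ_ℓ·μ}) ≠ 0 for all ℓ ∈ [m]. -/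
open Finset

namespace Stmt4

variable {N : ℕ}

lemma chi_mul_self (b : Bool) : chi b * chi b = 1 := by cases b <;> norm_num [chi]

lemma chi_not (b : Bool) : chi (!b) = - chi b := by cases b <;> norm_num [chi]

def flip (i₀ : Fin N) (y : Fin N → Bool) : Fin N → Bool := Function.update y i₀ (!y i₀)

lemma flip_invol (i₀ : Fin N) : Function.Involutive (flip i₀) := by
  intro y; funext i
  by_cases h : i = i₀
  · subst h; simp [flip]
  · simp [flip, Function.update_of_ne h]

lemma charS_flip_mem {W : Finset (Fin N)} {i₀ : Fin N} (h : i₀ ∈ W) (y : Fin N → Bool) :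
    charS W (flip i₀ y) = - charS W y := by
  unfold charS
  rw [← Finset.mul_prod_erase _ _ h, ← Finset.mul_prod_erase _ (fun i => chi (y i)) h]
  have h1 : ∀ i ∈ W.erase i₀, chi (flip i₀ y i) = chi (y i) := by
    intro i hi
    rw [flip, Function.update_of_ne (Finset.ne_of_mem_erase hi)]
  rw [Finset.prod_congr rfl h1]
  have : chi (flip i₀ y i₀) = - chi (y i₀) := by
    simp [flip, chi_not]
  rw [this]; ring

lemma sum_charS_eq_zero {W : Finset (Fin N)} (hW : W.Nonempty) :
    ∑ y : Fin N → Bool, charS W y = 0 := by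
  obtain ⟨i₀, hi₀⟩ := hW
  have heq : ∑ y : Fin N → Bool, charS W (flip i₀ y) = ∑ y : Fin N → Bool, charS W y :=
    Equiv.sum_comp ((flip_invol i₀).toPerm _) (charS W)
  have h2 : ∑ y : Fin N → Bool, charS W (flip i₀ y) = - ∑ y : Fin N → Bool, charS W y := by
    rw [← Finset.sum_neg_distrib]
    exact Finset.sum_congr rfl fun y _ => charS_flip_mem hi₀ y
  linarith [heq, h2]

lemma card_fun_bool : (Fintype.card (Fin N → Bool)) = 2 ^ N := by
  simp [Fintype.card_fun]

lemma sum_charS (W : Finset (Fin N)) :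
    ∑ y : Fin N → Bool, charS W y = if W = ∅ then (2:ℝ)^N else 0 := by
  split_ifs with h
  · subst h
    simp only [charS, Finset.prod_empty]
    rw [Finset.sum_const, Finset.card_univ, card_fun_bool]
    norm_num
  · exact sum_charS_eq_zero (Finset.nonempty_iff_ne_empty.2 h)

lemma charS_mul (U V : Finset (Fin N)) (y : Fin N → Bool) :
    charS U y * charS V y = charS ((U \ V) ∪ (V \ U)) y := by
  unfold charS
  have hU : (∏ i ∈ U, chi (y i)) = (∏ i ∈ U \ V, chi (y i)) * ∏ i ∈ U ∩ V, chi (y i) := by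
    rw [← Finset.prod_union (Finset.disjoint_sdiff_inter U V), Finset.sdiff_union_inter]
  have hV : (∏ i ∈ V, chi (y i)) = (∏ i ∈ V \ U, chi (y i)) * ∏ i ∈ U ∩ V, chi (y i) := by
    rw [Finset.inter_comm, ← Finset.prod_union (Finset.disjoint_sdiff_inter V U),
      Finset.sdiff_union_inter]
  have hone : (∏ i ∈ U ∩ V, chi (y i)) * ∏ i ∈ U ∩ V, chi (y i) = 1 := by
    rw [← Finset.prod_mul_distrib]
    exact Finset.prod_eq_one fun i _ => chi_mul_self (y i)
  rw [hU, hV, Finset.prod_union (disjoint_sdiff_sdiff : Disjoint (U \ V) (V \ U))]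
  calc ((∏ i ∈ U \ V, chi (y i)) * ∏ i ∈ U ∩ V, chi (y i)) *
        ((∏ i ∈ V \ U, chi (y i)) * ∏ i ∈ U ∩ V, chi (y i))
      = ((∏ i ∈ U \ V, chi (y i)) * ∏ i ∈ V \ U, chi (y i)) *
        ((∏ i ∈ U ∩ V, chi (y i)) * ∏ i ∈ U ∩ V, chi (y i)) := by ring
    _ = (∏ i ∈ U \ V, chi (y i)) * ∏ i ∈ V \ U, chi (y i) := by rw [hone, mul_one]

lemma sum_charS_mul (U V : Finset (Fin N)) :
    ∑ y : Fin N → Bool, charS U y * charS V y = if U = V then (2:ℝ)^N else 0 := by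
  have h1 : ∀ y : Fin N → Bool, charS U y * charS V y = charS ((U \ V) ∪ (V \ U)) y :=
    charS_mul U V
  rw [Finset.sum_congr rfl fun y _ => h1 y, sum_charS]
  have h2 : ((U \ V) ∪ (V \ U)) = ∅ ↔ U = V := by
    rw [Finset.union_eq_empty, Finset.sdiff_eq_empty_iff_subset, Finset.sdiff_eq_empty_iff_subset]
    exact ⟨fun ⟨a, b⟩ => Finset.Subset.antisymm a b, fun h => by subst h; exact ⟨le_rfl, le_rfl⟩⟩
  rw [if_congr h2 rfl rfl]

lemma sum_over_sets (x y : Fin N → Bool) :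
    ∑ S : Finset (Fin N), charS S x * charS S y = if x = y then (2:ℝ)^N else 0 := by
  have h1 : ∀ S : Finset (Fin N), charS S x * charS S y
      = ∏ i ∈ S, (chi (x i) * chi (y i)) := by
    intro S; rw [charS, charS, Finset.prod_mul_distrib]
  simp_rw [h1]
  have h2 : ∑ S : Finset (Fin N), ∏ i ∈ S, (chi (x i) * chi (y i))
      = ∏ i : Fin N, (chi (x i) * chi (y i) + 1) := by
    rw [Finset.prod_add]
    rw [← Finset.powerset_univ]
    exact (Finset.sum_congr rfl fun t _ => by simp).symm
  rw [h2]
  split_ifs with h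
  · subst h
    have : ∀ i : Fin N, chi (x i) * chi (x i) + 1 = 2 := fun i => by
      rw [chi_mul_self]; norm_num
    rw [Finset.prod_congr rfl fun i _ => this i, Finset.prod_const, Finset.card_univ,
      Fintype.card_fin]
  · have : ∃ i, x i ≠ y i := by
      by_contra hc; push_neg at hc; exact h (funext hc)
    obtain ⟨i₀, hi₀⟩ := this
    refine Finset.prod_eq_zero (Finset.mem_univ i₀) ?_
    have : chi (x i₀) * chi (y i₀) = -1 := by
      revert hi₀; cases x i₀ <;> cases y i₀ <;> simp [chi]
    rw [this]; norm_num

lemma two_pow_ne : ((2:ℝ)^N) ≠ 0 := by positivity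

lemma inversion (g : (Fin N → Bool) → ℝ) (y : Fin N → Bool) :
    g y = ∑ S : Finset (Fin N), coeff g S * charS S y := by
  simp_rw [coeff, mul_assoc, ← Finset.mul_sum, Finset.sum_mul]
  rw [Finset.sum_comm]
  have h1 : ∀ x, ∑ S : Finset (Fin N), g x * charS S x * charS S y
      = g x * (if x = y then (2:ℝ)^N else 0) := by
    intro x
    rw [← sum_over_sets x y, Finset.mul_sum]
    exact Finset.sum_congr rfl fun S _ => by ring
  rw [Finset.sum_congr rfl fun x _ => h1 x]
  simp only [mul_ite, mul_zero, Finset.sum_ite_eq', Finset.mem_univ, if_true]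
  field_simp

lemma coeff_eq_zero_of_zero {g : (Fin N → Bool) → ℝ} (h : ∀ x, g x = 0) (T : Finset (Fin N)) :
    coeff g T = 0 := by simp [coeff, h]

lemma charS_patch (S : Finset (Fin N)) (ρ : PartialAssignment N) (y : Fin N → Bool) :
    charS S (patch y ρ)
      = (∏ i ∈ S ∩ suppPA ρ, chi ((ρ i).getD true)) * charS (S \ suppPA ρ) y := by
  unfold charS
  have hsplit : (∏ i ∈ S, chi (patch y ρ i))
      = (∏ i ∈ S ∩ suppPA ρ, chi (patch y ρ i)) * ∏ i ∈ S \ suppPA ρ, chi (patch y ρ i) := by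
    rw [← Finset.prod_union (Finset.disjoint_sdiff_inter S (suppPA ρ)).symm,
      show S ∩ suppPA ρ ∪ S \ suppPA ρ = S by rw [Finset.union_comm, Finset.sdiff_union_inter]]
  rw [hsplit]
  congr 1
  all_goals refine Finset.prod_congr rfl fun i hi => ?_
  · have hs : (ρ i).isSome := by
      have := (Finset.mem_inter.1 hi).2
      simpa [suppPA] using this
    obtain ⟨b, hb⟩ := Option.isSome_iff_exists.1 hs
    simp [patch, hb]
  · have hn : ρ i = none := by
      have := (Finset.mem_sdiff.1 hi).2
      simpa [suppPA, Option.not_isSome_iff_eq_none] using this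
    simp [patch, hn]

lemma coeff_comp (g : (Fin N → Bool) → ℝ) (ρ : PartialAssignment N) (T : Finset (Fin N)) :
    coeff (fun y => g (patch y ρ)) T
      = ∑ S ∈ Finset.univ.filter (fun S : Finset (Fin N) => S \ suppPA ρ = T),
          coeff g S * ∏ i ∈ S ∩ suppPA ρ, chi ((ρ i).getD true) := by
  classical
  have hstep : ∀ y, g (patch y ρ) * charS T y
      = ∑ S : Finset (Fin N), coeff g S * (∏ i ∈ S ∩ suppPA ρ, chi ((ρ i).getD true)) *
          (charS (S \ suppPA ρ) y * charS T y) := by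
    intro y
    rw [inversion g (patch y ρ), Finset.sum_mul]
    refine Finset.sum_congr rfl fun S _ => ?_
    rw [charS_patch]; ring
  rw [coeff, Finset.sum_congr rfl fun y _ => hstep y, Finset.sum_comm]
  have h2 : ∀ S : Finset (Fin N),
      ∑ y : Fin N → Bool, coeff g S * (∏ i ∈ S ∩ suppPA ρ, chi ((ρ i).getD true)) *
          (charS (S \ suppPA ρ) y * charS T y)
      = coeff g S * (∏ i ∈ S ∩ suppPA ρ, chi ((ρ i).getD true)) *
          (if S \ suppPA ρ = T then (2:ℝ)^N else 0) := by
    intro S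
    rw [← Finset.mul_sum, sum_charS_mul]
  rw [Finset.sum_congr rfl fun S _ => h2 S, Finset.mul_sum, Finset.sum_filter]
  refine Finset.sum_congr rfl fun S _ => ?_
  split_ifs with h
  · field_simp
  · ring

lemma supp_of_ite (T : Finset (Fin N)) (y : Fin N → Bool) :
    suppPA (fun i => if i ∈ T then some (y i) else none) = T := by
  ext i; by_cases h : i ∈ T <;> simp [suppPA, h]

lemma block_exists (g : (Fin N → Bool) → ℝ) (T : Finset (Fin N))
    (hT : coeff g T ≠ 0) (hmax : ∀ S, coeff g S ≠ 0 → S.card ≤ T.card) (x : Fin N → Bool) :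
    ∃ ν : PartialAssignment N, suppPA ν = T ∧ g (patch x ν) ≠ 0 := by
  classical
  set ρ : PartialAssignment N := fun i => if i ∈ T then none else some (x i) with hρ
  have hP : suppPA ρ = Tᶜ := by
    ext i; by_cases h : i ∈ T <;> simp [suppPA, hρ, h]
  have hco : coeff (fun y => g (patch y ρ)) T = coeff g T := by
    rw [coeff_comp, hP, Finset.sum_filter, Finset.sum_eq_single T]
    · have h1 : T \ Tᶜ = T := by
        ext i; simp
      have h2 : T ∩ Tᶜ = ∅ := by
        ext i; simp
      simp [h1, h2]
    · intro S _ hS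
      split_ifs with hST
      · have hTS : T ⊆ S := by
          intro i hi
          have : i ∈ S \ Tᶜ := hST.symm ▸ hi
          exact (Finset.mem_sdiff.1 this).1
        have hc : coeff g S = 0 := by
          by_contra hc
          exact hS (Finset.eq_of_subset_of_card_le hTS (hmax S hc)).symm
        simp [hc]
      · rfl
    · intro h; exact absurd (Finset.mem_univ T) h
  have hex : ∃ y, g (patch y ρ) ≠ 0 := by
    by_contra h; push_neg at h
    exact hT (hco ▸ coeff_eq_zero_of_zero h T)
  obtain ⟨y, hy⟩ := hex
  refine ⟨fun i => if i ∈ T then some (y i) else none, supp_of_ite T y, ?_⟩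
  have hpp : patch x (fun i => if i ∈ T then some (y i) else none) = patch y ρ := by
    funext i; by_cases h : i ∈ T <;> simp [patch, hρ, h]
  rw [hpp]; exact hy

lemma patch_trivial (x : Fin N → Bool) : patch x (fun _ => none) = x := by
  funext i; rfl

lemma supp_trivial : suppPA (fun _ => none : PartialAssignment N) = ∅ := by
  ext i; simp [suppPA]

lemma key (m : ℕ) (hm : 0 < m) :
    ∀ e : ℕ, ∀ g : (Fin N → Bool) → ℝ, (∃ x, g x ≠ 0) →
      (∀ T, coeff g T ≠ 0 → T.card ≤ e) →
      ∃ μ : PartialAssignment N, (suppPA μ).card ≤ m * e ^ 2 ∧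
        ((∀ x, g (patch x μ) ≠ 0) ∨
          ∀ x, ∃ μs : Fin m → PartialAssignment N,
            (∀ ℓ ℓ', ℓ ≠ ℓ' → Disjoint (suppPA (μs ℓ)) (suppPA (μs ℓ'))) ∧
            (∀ ℓ, (suppPA (μs ℓ)).card ≤ e) ∧
            (∀ ℓ, g (patch (patch x (μs ℓ)) μ) ≠ 0)) := by
  intro e
  induction e with
  | zero =>
    intro g hg hdeg
    obtain ⟨x₀, hx₀⟩ := hg
    have hconst : ∀ y, g y = coeff g ∅ := by
      intro y
      rw [inversion g y, Finset.sum_eq_single (∅ : Finset (Fin N))]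
      · simp [charS]
      · intro S _ hS
        have hc : coeff g S = 0 := by
          by_contra hc
          exact hS (Finset.card_eq_zero.1 (Nat.le_zero.1 (hdeg S hc)))
        simp [hc]
      · intro h; exact absurd (Finset.mem_univ _) h
    refine ⟨fun _ => none, by simp [supp_trivial], Or.inl fun x => ?_⟩
    rw [patch_trivial, hconst x, ← hconst x₀]
    exact hx₀
  | succ e' IH =>
    intro g hg hdeg
    classical
    obtain ⟨x₀, hx₀⟩ := hg
    set M : Finset (Finset (Fin N)) :=
      Finset.univ.filter (fun T => coeff g T ≠ 0 ∧ T.card = e' + 1) with hM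
    set 𝒜 : Finset (Finset (Finset (Fin N))) :=
      M.powerset.filter (fun F => ∀ T ∈ F, ∀ T' ∈ F, T ≠ T' → Disjoint T T') with hA
    have hA0 : (∅ : Finset (Finset (Fin N))) ∈ 𝒜 := by simp [hA]
    obtain ⟨F, hF, hFmax⟩ := Finset.exists_max_image 𝒜 Finset.card ⟨∅, hA0⟩
    have hFM : F ⊆ M := Finset.mem_powerset.1 (Finset.mem_filter.1 hF).1
    have hFpair : ∀ T ∈ F, ∀ T' ∈ F, T ≠ T' → Disjoint T T' :=
      (Finset.mem_filter.1 hF).2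
    have hMcoeff : ∀ T ∈ M, coeff g T ≠ 0 ∧ T.card = e' + 1 := by
      intro T hT; exact (Finset.mem_filter.1 hT).2
    by_cases hcard : m ≤ F.card
    · -- success case: m pairwise disjoint max monomials
      obtain ⟨F', hF'sub, hF'card⟩ := Finset.exists_subset_card_eq hcard
      let eq : F' ≃ Fin m := (F'.equivFin).trans (finCongr hF'card)
      let Tm : Fin m → Finset (Fin N) := fun ℓ => ((eq.symm ℓ : F') : Finset (Fin N))
      have hTmF : ∀ ℓ, Tm ℓ ∈ F := fun ℓ => hF'sub (eq.symm ℓ).2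
      have hTmne : ∀ ℓ ℓ', ℓ ≠ ℓ' → Tm ℓ ≠ Tm ℓ' := by
        intro ℓ ℓ' hne h
        exact hne (eq.symm.injective (Subtype.coe_injective h))
      refine ⟨fun _ => none, by simp [supp_trivial], Or.inr fun x => ?_⟩
      have hblock : ∀ ℓ : Fin m, ∃ ν : PartialAssignment N,
          suppPA ν = Tm ℓ ∧ g (patch x ν) ≠ 0 := by
        intro ℓ
        obtain ⟨hco, hcd⟩ := hMcoeff _ (hFM (hTmF ℓ))
        refine block_exists g (Tm ℓ) hco (fun S hS => ?_) x
        rw [hcd]; exact hdeg S hS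
      choose ν hν1 hν2 using hblock
      refine ⟨ν, ?_, ?_, ?_⟩
      · intro ℓ ℓ' hne
        rw [hν1, hν1]
        exact hFpair _ (hTmF ℓ) _ (hTmF ℓ') (hTmne ℓ ℓ' hne)
      · intro ℓ
        rw [hν1]
        exact le_of_eq (hMcoeff _ (hFM (hTmF ℓ))).2
      · intro ℓ
        rw [patch_trivial]
        exact hν2 ℓ
    · -- reduction case
      push_neg at hcard
      set B : Finset (Fin N) := F.biUnion id with hB
      have hBcard : B.card ≤ (m - 1) * (e' + 1) := by
        calc B.card ≤ ∑ T ∈ F, T.card := by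
              simpa using Finset.card_biUnion_le (s := F) (t := id)
          _ = ∑ _T ∈ F, (e' + 1) :=
              Finset.sum_congr rfl fun T hT => (hMcoeff T (hFM hT)).2
          _ = F.card * (e' + 1) := by rw [Finset.sum_const, smul_eq_mul]
          _ ≤ (m - 1) * (e' + 1) := by
              have : F.card ≤ m - 1 := by omega
              exact Nat.mul_le_mul_right _ this
      have hmeet : ∀ S, coeff g S ≠ 0 → (S \ B).card ≤ e' := by
        intro S hS
        rcases Nat.lt_or_ge S.card (e' + 1) with h | h
        · calc (S \ B).card ≤ S.card := Finset.card_le_card (Finset.sdiff_subset)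
            _ ≤ e' := by omega
        · have hSe : S.card = e' + 1 := le_antisymm (hdeg S hS) h
          have hSM : S ∈ M := by
            rw [hM]; simp only [Finset.mem_filter, Finset.mem_univ, true_and]
            exact ⟨hS, hSe⟩
          by_cases hSF : S ∈ F
          · have hsub : S ⊆ B := Finset.subset_biUnion_of_mem id hSF
            rw [Finset.sdiff_eq_empty_iff_subset.2 hsub]
            simp
          · by_cases hdisj : ∀ T ∈ F, Disjoint S T
            · exfalso
              have hins : insert S F ∈ 𝒜 := by
                rw [hA]
                refine Finset.mem_filter.2 ⟨Finset.mem_powerset.2 ?_, ?_⟩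
                · exact Finset.insert_subset hSM hFM
                · intro T hT T' hT' hne
                  rcases Finset.mem_insert.1 hT with h1 | h1 <;>
                    rcases Finset.mem_insert.1 hT' with h2 | h2
                  · exact absurd (h1.trans h2.symm) hne
                  · subst h1; exact hdisj T' h2
                  · subst h2; exact (hdisj T h1).symm
                  · exact hFpair T h1 T' h2 hne
              have := hFmax _ hins
              rw [Finset.card_insert_of_notMem hSF] at this
              omega
            · push_neg at hdisj
              obtain ⟨T, hTF, hTd⟩ := hdisj
              obtain ⟨i, hiS, hiT⟩ := Finset.not_disjoint_iff.1 hTd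
              have hiB : i ∈ B := Finset.mem_biUnion.2 ⟨T, hTF, hiT⟩
              have hlt : (S \ B).card < S.card :=
                Finset.card_lt_card ⟨Finset.sdiff_subset,
                  fun hsub => (Finset.mem_sdiff.1 (hsub hiS)).2 hiB⟩
              omega
      set ρ : PartialAssignment N := fun i => if i ∈ B then some (x₀ i) else none with hρ
      have hPρ : suppPA ρ = B := supp_of_ite B x₀
      have hg'x₀ : g (patch x₀ ρ) ≠ 0 := by
        have : patch x₀ ρ = x₀ := by
          funext i; by_cases h : i ∈ B <;> simp [patch, hρ, h]
        rw [this]; exact hx₀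
      have hdeg' : ∀ T, coeff (fun y => g (patch y ρ)) T ≠ 0 → T.card ≤ e' := by
        intro T hT
        rw [coeff_comp, hPρ] at hT
        obtain ⟨S, hSmem, hSne⟩ := Finset.exists_ne_zero_of_sum_ne_zero hT
        have hSB : S \ B = T := (Finset.mem_filter.1 hSmem).2
        have hcS : coeff g S ≠ 0 := left_ne_zero_of_mul hSne
        rw [← hSB]
        exact hmeet S hcS
      obtain ⟨μ', hμ'card, hcase⟩ := IH (fun y => g (patch y ρ)) ⟨x₀, hg'x₀⟩ hdeg'
      set ν : PartialAssignment N := fun i => if i ∈ B then some (x₀ i) else μ' i with hν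
      have hpatchν : ∀ y, patch y ν = patch (patch y μ') ρ := by
        intro y; funext i
        by_cases h : i ∈ B <;> simp [patch, hν, hρ, h]
      have hsupp : suppPA ν ⊆ B ∪ suppPA μ' := by
        intro i hi
        by_cases h : i ∈ B
        · exact Finset.mem_union_left _ h
        · refine Finset.mem_union_right _ ?_
          simp only [suppPA, Finset.mem_filter, Finset.mem_univ, true_and] at hi ⊢
          simpa [hν, h] using hi
      have hνcard : (suppPA ν).card ≤ m * (e' + 1) ^ 2 := by
        calc (suppPA ν).card ≤ (B ∪ suppPA μ').card := Finset.card_le_card hsupp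
          _ ≤ B.card + (suppPA μ').card := Finset.card_union_le _ _
          _ ≤ (m - 1) * (e' + 1) + m * e' ^ 2 := Nat.add_le_add hBcard hμ'card
          _ ≤ m * (e' + 1) ^ 2 := by
              obtain ⟨m', rfl⟩ : ∃ m', m = m' + 1 := ⟨m - 1, by omega⟩
              simp only [Nat.add_sub_cancel]
              nlinarith [Nat.zero_le (m' * e')]
      refine ⟨ν, hνcard, ?_⟩
      rcases hcase with hleft | hright
      · refine Or.inl fun x => ?_
        rw [hpatchν]
        exact hleft x
      · refine Or.inr fun x => ?_
        obtain ⟨μs, hd, hc, hnz⟩ := hright x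
        refine ⟨μs, hd, fun ℓ => le_trans (hc ℓ) (by omega), fun ℓ => ?_⟩
        rw [hpatchν]
        exact hnz ℓ

end Stmt4

/-- win-win reprogramming lemma. For nonzero `f` of degree `d` and `m > 0`
there is a partial assignment `μ` of size at most `m·d²` such that either `f(x^μ) ≠ 0` for all
`x`, or for every `x` there exist `m` pairwise disjoint partial assignments `μ_1, …, μ_m` of
size at most `d` with `f(x^{μ_ℓ · μ}) ≠ 0` for all `ℓ`. (Recall `x^{μ_ℓ·μ} = (x^{μ_ℓ})^μ`.) -/
theorem stmt4 {N : ℕ} (f : (Fin N → Bool) → ℝ) (d m : ℕ) (hm : 0 < m)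
    (hf : ∃ x, f x ≠ 0)
    (hdeg_le : ∀ T, coeff f T ≠ 0 → T.card ≤ d)
    (hdeg_eq : ∃ T, coeff f T ≠ 0 ∧ T.card = d) :
    ∃ μ : PartialAssignment N, (suppPA μ).card ≤ m * d ^ 2 ∧
      ((∀ x, f (patch x μ) ≠ 0) ∨
        ∀ x, ∃ μs : Fin m → PartialAssignment N,
          (∀ ℓ ℓ', ℓ ≠ ℓ' → Disjoint (suppPA (μs ℓ)) (suppPA (μs ℓ'))) ∧
          (∀ ℓ, (suppPA (μs ℓ)).card ≤ d) ∧
          (∀ ℓ, f (patch (patch x (μs ℓ)) μ) ≠ 0)) :=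
  Stmt4.key m hm d f hf hdeg_le
end

section
/- If ρ_{AB} is a separable bipartite quantum state, then the conditional von Neumann entropy S(A|B)_ρ = S(AB)_ρ − S(B)_ρ is nonnegative. -/
/-!
Separability gives the reduction criterion `ρ ≤ 1 ⊗ ρ_B`: writing `ρ = ∑ pₖ αₖ ⊗ βₖ` we have
`ρ_B = ∑ pₖ βₖ`, and `αₖ ≤ 1` because a density matrix has eigenvalues in `[0, 1]`. The logarithm
is operator monotone, so after shifting both sides by a small multiple of the identity,
`Tr ρ log ρ ≤ Tr ρ log (1 ⊗ ρ_B) = Tr ρ_B log ρ_B`, which is `S(B) ≤ S(AB)`. The shift is removed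
by letting it tend to `0`, using the continuity of `x ↦ -x log x`.
-/

open Matrix Finset
open scoped ComplexOrder

/-- The von Neumann entropy `S(ρ) = -∑ λ_i log λ_i` of a Hermitian matrix, via its
eigenvalues (junk value `0` for non-Hermitian matrices). -/
noncomputable def vNE {n : Type*} [Fintype n] [DecidableEq n] (ρ : Matrix n n ℂ) : ℝ :=
  if h : ρ.IsHermitian then -∑ i, h.eigenvalues i * Real.log (h.eigenvalues i) else 0

/-- A density matrix: positive semidefinite with unit trace. -/
def IsDensity {n : Type*} [Fintype n] [DecidableEq n] (ρ : Matrix n n ℂ) : Prop :=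
  ρ.PosSemidef ∧ ρ.trace = 1

/-- Separability of a bipartite state: a convex combination of products of density matrices. -/
def Separable {A B : Type*} [Fintype A] [DecidableEq A] [Fintype B] [DecidableEq B]
    (ρ : Matrix (A × B) (A × B) ℂ) : Prop :=
  ∃ (s : ℕ) (p : Fin s → ℝ) (α : Fin s → Matrix A A ℂ) (β : Fin s → Matrix B B ℂ),
    (∀ k, 0 ≤ p k) ∧ (∑ k, p k = 1) ∧
    (∀ k, IsDensity (α k)) ∧ (∀ k, IsDensity (β k)) ∧
    ∀ x y : A × B, ρ x y = ∑ k, (p k : ℂ) * (α k x.1 y.1 * β k x.2 y.2)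

/-- The `B`-marginal of a bipartite state. -/
noncomputable def margSnd {A B : Type*} [Fintype A]
    (ρ : Matrix (A × B) (A × B) ℂ) : Matrix B B ℂ :=
  fun b b' => ∑ a, ρ (a, b) (a, b')

open scoped Matrix.Norms.L2Operator MatrixOrder Kronecker
open Real

section Spectral

variable {n : Type*} [Fintype n] [DecidableEq n]

lemma Matrix.IsHermitian.trace_cfc {X : Matrix n n ℂ} (hX : X.IsHermitian) (f : ℝ → ℝ) :
    (cfc f X).trace = ∑ i, (f (hX.eigenvalues i) : ℂ) := by
  rw [hX.cfc_eq, IsHermitian.cfc, Unitary.conjStarAlgAut_apply, trace_mul_cycle,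
    Unitary.coe_star_mul_self, one_mul, trace_diagonal]
  rfl

lemma vNE_eq_sum_negMulLog {X : Matrix n n ℂ} (hX : X.IsHermitian) :
    vNE X = ∑ i, negMulLog (hX.eigenvalues i) := by
  simp only [vNE, dif_pos hX, negMulLog, neg_mul, sum_neg_distrib]

lemma Matrix.IsHermitian.trace_mul_log_add_algebraMap {X : Matrix n n ℂ} (hX : X.IsHermitian)
    (c : ℝ) :
    ((X + algebraMap ℝ _ c) * cfc log (X + algebraMap ℝ _ c)).trace
      = -∑ i, (negMulLog (hX.eigenvalues i + c) : ℂ) := by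
  have hshift : X + algebraMap ℝ _ c = cfc (fun x => x + c) X := by
    rw [cfc_add_const c (fun x => x) X, cfc_id' ℝ X]
  rw [hshift, ← cfc_comp' log (fun x => x + c) X
      ((X.finite_real_spectrum.image _).continuousOn _),
    ← cfc_mul (fun x => x + c) (fun x => log (x + c)) X
      (X.finite_real_spectrum.continuousOn _) (X.finite_real_spectrum.continuousOn _),
    hX.trace_cfc, ← sum_neg_distrib]
  refine sum_congr rfl fun i _ => ?_
  push_cast [negMulLog]
  ring

lemma trace_mul_nonneg {X Y : Matrix n n ℂ} (hX : 0 ≤ X) (hY : 0 ≤ Y) : 0 ≤ (X * Y).trace := by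
  obtain ⟨s, rfl⟩ := CStarAlgebra.nonneg_iff_eq_star_mul_self.mp hX
  rw [mul_assoc, trace_mul_comm, mul_assoc, ← mul_assoc]
  exact (star_right_conjugate_nonneg hY s).posSemidef.trace_nonneg

lemma trace_mul_log_le_of_le {X Y : Matrix n n ℂ} (hX : IsStrictlyPositive X) (hXY : X ≤ Y) :
    (X * cfc log X).trace ≤ (X * cfc log Y).trace := by
  rw [← sub_nonneg, ← trace_sub, ← mul_sub]
  exact trace_mul_nonneg hX.nonneg (sub_nonneg.mpr (CFC.log_le_log hXY hX))

lemma IsDensity.nonempty {ρ : Matrix n n ℂ} (hρ : IsDensity ρ) : Nonempty n := by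
  by_contra h
  rw [not_nonempty_iff] at h
  simpa [trace] using hρ.2

lemma IsDensity.le_one {ρ : Matrix n n ℂ} (hρ : IsDensity ρ) : ρ ≤ 1 := by
  rw [← map_one (algebraMap ℝ (Matrix n n ℂ))]
  refine le_algebraMap_of_spectrum_le (fun x hx => ?_) hρ.1.isHermitian.isSelfAdjoint
  obtain ⟨i, rfl⟩ := hρ.1.isHermitian.spectrum_real_eq_range_eigenvalues ▸ hx
  have hsum : ∑ j, hρ.1.isHermitian.eigenvalues j = 1 := by
    have htrace := hρ.1.isHermitian.trace_eq_sum_eigenvalues.symm.trans hρ.2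
    rw [← RCLike.ofReal_sum] at htrace
    exact Complex.ofReal_eq_one.mp htrace
  exact hsum ▸ single_le_sum (fun j _ => hρ.1.eigenvalues_nonneg j) (mem_univ i)

end Spectral

lemma Matrix.IsHermitian.margSnd {A B : Type*} [Fintype A] {X : Matrix (A × B) (A × B) ℂ}
    (hX : X.IsHermitian) : (margSnd X).IsHermitian := by
  ext b b'
  simp only [_root_.margSnd, conjTranspose_apply, star_sum]
  exact sum_congr rfl fun a _ => hX.apply (a, b) (a, b')

lemma trace_mul_one_kronecker {A B : Type*} [Fintype A] [DecidableEq A] [Fintype B]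
    (X : Matrix (A × B) (A × B) ℂ) (L : Matrix B B ℂ) :
    (X * ((1 : Matrix A A ℂ) ⊗ₖ L)).trace = (margSnd X * L).trace := by
  simp only [trace, diag_apply, mul_apply, kroneckerMap_apply, one_apply, margSnd,
    Fintype.sum_prod_type, ite_mul, one_mul, zero_mul, mul_ite, mul_zero, sum_ite_irrel,
    sum_const_zero, sum_ite_eq', mem_univ, if_true, sum_mul]
  rw [sum_comm]
  refine sum_congr rfl fun b _ => ?_
  rw [sum_comm]

lemma kronecker_le_kronecker_left {A B : Type*} [Fintype A] [Fintype B] {X Y : Matrix A A ℂ}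
    (hXY : X ≤ Y) {Z : Matrix B B ℂ} (hZ : 0 ≤ Z) : X ⊗ₖ Z ≤ Y ⊗ₖ Z := by
  have hsub : Y ⊗ₖ Z - X ⊗ₖ Z = (Y - X) ⊗ₖ Z := by
    rw [sub_eq_iff_eq_add, ← add_kronecker, sub_add_cancel]
  rw [le_iff, hsub]
  exact (le_iff.mp hXY).kronecker hZ.posSemidef

section Bipartite

variable {A B : Type*} [Fintype A] [DecidableEq A] [Fintype B] [DecidableEq B]

variable (A B) in
@[simps apply]
noncomputable def oneKroneckerStarAlgHom : Matrix B B ℂ →⋆ₐ[ℂ] Matrix (A × B) (A × B) ℂ where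
  toFun M := 1 ⊗ₖ M
  map_one' := one_kronecker_one
  map_mul' M N := by rw [← mul_kronecker_mul, one_mul]
  map_zero' := kronecker_zero _
  map_add' := kronecker_add 1
  commutes' c := by
    simp only [Algebra.algebraMap_eq_smul_one, kronecker_smul, one_kronecker_one]
  map_star' M := by
    simp only [star_eq_conjTranspose, conjTranspose_kronecker, conjTranspose_one]

lemma cfc_one_kronecker (f : ℝ → ℝ) {M : Matrix B B ℂ} (hM : M.IsHermitian) :
    cfc f ((1 : Matrix A A ℂ) ⊗ₖ M) = 1 ⊗ₖ cfc f M :=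
  ((oneKroneckerStarAlgHom A B).map_cfc f M (M.finite_real_spectrum.continuousOn _)
    (continuous_matrix fun x y => continuous_const.mul (continuous_id.matrix_elem x.2 y.2))
    hM.isSelfAdjoint (hM.isSelfAdjoint.map _)).symm

lemma margSnd_add_algebraMap (X : Matrix (A × B) (A × B) ℂ) (c : ℝ) :
    margSnd (X + algebraMap ℝ _ c) = margSnd X + algebraMap ℝ _ (Fintype.card A * c) := by
  ext b b'
  simp [margSnd, Algebra.algebraMap_eq_smul_one, one_apply, sum_add_distrib]

lemma Separable.le_one_kronecker_margSnd {ρ : Matrix (A × B) (A × B) ℂ} (hρ : Separable ρ) :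
    ρ ≤ 1 ⊗ₖ margSnd ρ := by
  obtain ⟨s, p, α, β, hp, -, hα, hβ, hρ⟩ := hρ
  have hρ_eq : ρ = ∑ k, (p k : ℂ) • (α k ⊗ₖ β k) := by
    ext x y
    simp [hρ, Matrix.sum_apply]
  have hmarg : margSnd ρ = ∑ k, (p k : ℂ) • β k := by
    ext b b'
    simp only [margSnd, hρ, Matrix.sum_apply, Matrix.smul_apply, smul_eq_mul]
    rw [sum_comm]
    refine sum_congr rfl fun k _ => ?_
    rw [← mul_sum, ← sum_mul, show ∑ a, α k a a = 1 from (hα k).2, one_mul]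
  rw [hmarg, ← oneKroneckerStarAlgHom_apply, map_sum, hρ_eq]
  refine sum_le_sum fun k _ => ?_
  rw [map_smul, oneKroneckerStarAlgHom_apply]
  exact smul_le_smul_of_nonneg_left
    (kronecker_le_kronecker_left (hα k).le_one (hβ k).1.nonneg) (Complex.zero_le_real.mpr (hp k))

theorem sum_negMulLog_margSnd_add_le [Nonempty A] {ρ : Matrix (A × B) (A × B) ℂ}
    (hρ : ρ.PosSemidef) (hred : ρ ≤ 1 ⊗ₖ margSnd ρ) {ε : ℝ} (hε : 0 < ε) :
    ∑ j, negMulLog (hρ.isHermitian.margSnd.eigenvalues j + ε)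
      ≤ ∑ i, negMulLog (hρ.isHermitian.eigenvalues i + ε / Fintype.card A) := by
  -- shifting `ρ` by `ε / |A|` shifts its `B`-marginal by exactly `ε`
  set c := ε / Fintype.card A
  have hcard : (1 : ℝ) ≤ Fintype.card A := Nat.one_le_cast.mpr Fintype.card_pos
  have hc : 0 < c := div_pos hε (by linarith)
  set ρε := ρ + algebraMap ℝ _ c
  set σ := margSnd ρ + algebraMap ℝ _ ε
  have hσ : σ.IsHermitian := hρ.isHermitian.margSnd.add (IsSelfAdjoint.algebraMap _ (.all ε))
  have hpos : IsStrictlyPositive ρε :=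
    IsStrictlyPositive.nonneg_add hρ.nonneg (isStrictlyPositive_algebraMap hc)
  have hle : ρε ≤ 1 ⊗ₖ σ := by
    rw [kronecker_add, Algebra.algebraMap_eq_smul_one ε, kronecker_smul, one_kronecker_one,
      ← Algebra.algebraMap_eq_smul_one]
    exact add_le_add hred (algebraMap_mono _ (div_le_self hε.le hcard))
  have hmarg : margSnd ρε = σ := by
    rw [margSnd_add_algebraMap, mul_div_cancel₀ _ (by linarith)]
  have key := trace_mul_log_le_of_le hpos hle
  rw [cfc_one_kronecker log hσ, trace_mul_one_kronecker, hmarg,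
    hρ.isHermitian.trace_mul_log_add_algebraMap,
    hρ.isHermitian.margSnd.trace_mul_log_add_algebraMap, neg_le_neg_iff] at key
  exact_mod_cast key

end Bipartite

theorem tendsto_sum_negMulLog_add {ι : Type*} [Fintype ι] (d : ι → ℝ) {f : ℝ → ℝ}
    {l : Filter ℝ} (hf : Filter.Tendsto f l (nhds 0)) :
    Filter.Tendsto (fun ε => ∑ i, negMulLog (d i + f ε)) l (nhds (∑ i, negMulLog (d i))) :=
  tendsto_finsetSum _ fun i _ =>
    (continuous_negMulLog.tendsto _).comp (by simpa using hf.const_add (d i))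

/-- If `ρ_{AB}` is a separable bipartite state then the conditional von
Neumann entropy `S(A|B) = S(AB) − S(B)` is nonnegative. -/
theorem stmt8 {A B : Type*} [Fintype A] [DecidableEq A] [Fintype B] [DecidableEq B]
    (ρ : Matrix (A × B) (A × B) ℂ) (hρ : IsDensity ρ) (hsep : Separable ρ) :
    0 ≤ vNE ρ - vNE (margSnd ρ) := by
  have : Nonempty A := hρ.nonempty.map Prod.fst
  rw [vNE_eq_sum_negMulLog hρ.1.isHermitian, vNE_eq_sum_negMulLog hρ.1.isHermitian.margSnd,
    sub_nonneg]
  have hzero : Filter.Tendsto (fun ε : ℝ => ε) (nhdsWithin 0 (Set.Ioi 0)) (nhds 0) :=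
    tendsto_nhdsWithin_of_tendsto_nhds Filter.tendsto_id
  exact le_of_tendsto_of_tendsto (tendsto_sum_negMulLog_add _ hzero)
    (tendsto_sum_negMulLog_add _ (by simpa using hzero.div_const (Fintype.card A : ℝ)))
    (eventually_nhdsWithin_of_forall fun ε hε =>
      sum_negMulLog_margSnd_add_le hρ.1 hsep.le_one_kronecker_margSnd hε)
end
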